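/- arXiv:2003.06121 — 4 statements merged into one kernel-verified Lean document; each statement's English description precedes it below -/
import Mathlib

section
/- Let X be a totally bounded metric space and let D be an r-separated distribution over X × {−1,+1}. Let (k_n) be any sequence of positive integers with lim_{n→∞} k_n/n = 0, and let M be the k_n-nearest-neighbor classification algorithm. Then M is r-consistent with respect to D. -/
open MeasureTheory Metric Filter Finset
open scoped Classical ENNReal

noncomputable section

namespace RobustNP

variable {X : Type*} [MetricSpace X] [MeasurableSpace X]

/-- The sign of a boolean label: `true ↦ +1`, `false ↦ -1`.  We encode the label
space `{-1, +1}` by `Bool`, with `true` standing for `+1` and `false` for `-1`. -/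
def sgn (y : Bool) : ℝ := if y then 1 else -1

/-- A classifier `f : X → Bool` is astute at the labeled point `p = (x, y)` with radius `r`
if `f x' = y` for every `x'` in the closed ball of radius `r` around `x`. -/
def Astute (f : X → Bool) (r : ℝ) (p : X × Bool) : Prop :=
  ∀ x' ∈ closedBall p.1 r, f x' = p.2

/-- The astuteness `A_r(f, D)` of a classifier `f` over a distribution `D`:
the probability that `f` is astute at `(x, y) ~ D` with radius `r`. -/
def astuteness (D : Measure (X × Bool)) (f : X → Bool) (r : ℝ) : ℝ :=
  (D {p | Astute f r p}).toReal

/-- The optimal astuteness `A_r^*(D) = sup_f A_r(f, D)`. -/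
def optAstuteness (D : Measure (X × Bool)) (r : ℝ) : ℝ :=
  ⨆ f : X → Bool, astuteness D f r

/-- A distribution `D` over `X × {-1,+1}` is `r`-separated if there are sets
`T⁺, T⁻ ⊆ X` such that almost surely `x ∈ T^y`, and any two points of `T⁺` and `T⁻`
are at distance `> 2r`. -/
def RSeparated (D : Measure (X × Bool)) (r : ℝ) : Prop :=
  ∃ Tp Tm : Set X,
    D {p | p.1 ∈ (if p.2 then Tp else Tm)} = 1 ∧
    ∀ x₁ ∈ Tp, ∀ x₂ ∈ Tm, 2 * r < dist x₁ x₂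

/-- The distribution `D^n` of an i.i.d. sample of size `n` drawn from `D`. -/
def samples (D : Measure (X × Bool)) (n : ℕ) : Measure (Fin n → X × Bool) :=
  Measure.pi fun _ => D

/-- An algorithm `M` (mapping a labeled sample of each size `n` to a classifier) is
`r`-consistent with respect to `D` if for all `ε, δ ∈ (0,1)` and `0 < γ < r` there is `N`
such that for all `n ≥ N`, with probability at least `1 - δ` over `S ~ D^n`,
`A_{r-γ}(M(S), D) ≥ A_r^*(D) - ε`. -/
def RConsistent (M : ∀ n : ℕ, (Fin n → X × Bool) → X → Bool)
    (D : Measure (X × Bool)) (r : ℝ) : Prop :=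
  ∀ ε ∈ Set.Ioo (0 : ℝ) 1, ∀ δ ∈ Set.Ioo (0 : ℝ) 1, ∀ γ ∈ Set.Ioo (0 : ℝ) r,
    ∃ N : ℕ, ∀ n ≥ N,
      1 - δ ≤ (samples D n {s | optAstuteness D r - ε ≤ astuteness D (M n s) (r - γ)}).toReal

/-- A weight function: for each sample size `n` and each tuple of (unlabeled) sample points,
weights `w i x ∈ [0,1]` summing to one (for `n > 0`); the weights depend only on the sample
points, not the labels. -/
structure WeightFunction (X : Type*) where
  w : ∀ n : ℕ, (Fin n → X) → Fin n → X → ℝ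
  nonneg : ∀ n xs i x, 0 ≤ w n xs i x
  le_one : ∀ n xs i x, w n xs i x ≤ 1
  sum_eq_one : ∀ n : ℕ, 0 < n → ∀ xs x, ∑ i, w n xs i x = 1

/-- The classifier produced by a weight function on a labeled sample `s`:
output `+1` (i.e. `true`) iff `∑ i, w_i(x) * y_i > 0`. -/
def WeightFunction.classify (W : WeightFunction X) {n : ℕ}
    (s : Fin n → X × Bool) (x : X) : Bool :=
  if 0 < ∑ i, W.w n (fun j => (s j).1) i x * sgn (s i).2 then true else false

/-- The rank of sample point `i` with respect to query point `x`: the number of sample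
points strictly closer to `x` than `x_i` (ties broken by index).  Point `i` is among the
`k` nearest neighbors of `x` iff its rank is `< k`. -/
def knnRank {n : ℕ} (xs : Fin n → X) (x : X) (i : Fin n) : ℕ :=
  (univ.filter fun j => dist (xs j) x < dist (xs i) x ∨
    (dist (xs j) x = dist (xs i) x ∧ j < i)).card

/-- The `k`-nearest-neighbor classifier on the labeled sample `s`:
majority vote among the `k` nearest sample points (equivalently, the weight-function
classifier with weights `1/k` on the `k` nearest neighbors and `0` elsewhere). -/
def knnClassify (k : ℕ) {n : ℕ} (s : Fin n → X × Bool) (x : X) : Bool :=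
  if 0 < ∑ i ∈ univ.filter (fun i => knnRank (fun j => (s j).1) x i < k), sgn (s i).2
  then true else false

/-- The kernel classifier built from kernel `K` with bandwidth `h` on the labeled sample `s`:
the weight-function classifier with weights `w_i(x) = K(d(x,x_i)/h) / ∑_j K(d(x,x_j)/h)`. -/
def kernelClassify (K : ℝ → ℝ) (h : ℝ) {n : ℕ} (s : Fin n → X × Bool) (x : X) : Bool :=
  if 0 < ∑ i, (K (dist x (s i).1 / h) / ∑ j, K (dist x (s j).1 / h)) * sgn (s i).2
  then true else false

/-- A subset `T` of the index set of a labeled sample `s` is `r`-separated if any two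
sample points indexed by `T` carrying different labels are at distance `> 2r`. -/
def IndexSeparated (r : ℝ) {n : ℕ} (s : Fin n → X × Bool) (T : Finset (Fin n)) : Prop :=
  ∀ i ∈ T, ∀ j ∈ T, (s i).2 ≠ (s j).2 → 2 * r < dist (s i).1 (s j).1

/-- The sub-sample of `s` indexed by the finite index set `T`, re-indexed by `Fin T.card`. -/
def subSample {n : ℕ} (s : Fin n → X × Bool) (T : Finset (Fin n)) :
    Fin T.card → X × Bool :=
  fun i => s (T.orderIsoOfFin rfl i).val

/-- A finite set of labeled points is `r`-separated if oppositely labeled points are at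
distance `> 2r`. -/
def FinsetSeparated (r : ℝ) (S : Finset (X × Bool)) : Prop :=
  ∀ p ∈ S, ∀ q ∈ S, p.2 ≠ q.2 → 2 * r < dist p.1 q.1

/-!
Cover `X` by finitely many balls of radius `γ / 2` and keep the heavy ones, of mass at least
`η`; the light ones carry total mass at most `ε`. Since `k_n = o(n)`, Chebyshev's inequality
shows that with probability tending to one every heavy ball holds at least `k_n` sample points.
On that event, if `x ∈ T^y` lies in a heavy ball and `d(x', x) ≤ r - γ`, the `k_n` nearest
neighbours of `x'` lie within `r` of `x'`, hence within `2r - γ` of `x`. By `r`-separation every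
sample point is almost surely at distance `≥ 2r - γ / 2` from the class of the opposite label,
so all these neighbours carry the label `y`.
-/

section NearestNeighbors

variable {α : Type*} [MetricSpace α]

theorem exists_knnRank_eq_zero {n : ℕ} (hn : 0 < n) (xs : Fin n → α) (x : α) :
    ∃ i, knnRank xs x i = 0 := by
  have : Nonempty (Fin n) := Fin.pos_iff_nonempty.mp hn
  -- the lexicographic minimum of `(distance, index)` has no predecessor
  obtain ⟨i, -, hi⟩ :=
    exists_min_image univ (fun j => toLex (dist (xs j) x, j)) univ_nonempty
  refine ⟨i, card_eq_zero.mpr (filter_eq_empty_iff.mpr fun j _ => ?_)⟩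
  have := Prod.Lex.toLex_le_toLex.mp (hi j (mem_univ j))
  grind

theorem dist_le_of_knnRank_lt {n k : ℕ} {xs : Fin n → α} {x : α} {R : ℝ}
    (hcard : k ≤ #{j | dist (xs j) x ≤ R}) {i : Fin n} (hi : knnRank xs x i < k) :
    dist (xs i) x ≤ R := by
  by_contra! h
  have : #{j | dist (xs j) x ≤ R} ≤ knnRank xs x i :=
    card_le_card fun j hj => by
      simp only [mem_filter, mem_univ, true_and] at hj ⊢
      exact Or.inl (hj.trans_lt h)
  omega

theorem knnClassify_eq_of_le_card {k n : ℕ} (hk : 0 < k) {s : Fin n → α × Bool} {x : α}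
    {R : ℝ} {b : Bool} (hcard : k ≤ #{j | dist (s j).1 x ≤ R})
    (hlabel : ∀ i, dist (s i).1 x ≤ R → (s i).2 = b) :
    knnClassify k s x = b := by
  unfold knnClassify
  set nbrs := univ.filter fun i => knnRank (fun j => (s j).1) x i < k
  have hn : 0 < n := (hk.trans_le hcard).trans_le (card_filter_le _ _) |>.trans_eq (card_fin n)
  obtain ⟨i₀, hi₀⟩ := exists_knnRank_eq_zero hn (fun j => (s j).1) x
  have hnbrs : (0 : ℝ) < #nbrs := by
    exact_mod_cast card_pos.mpr ⟨i₀, by simp [nbrs, hi₀, hk]⟩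
  have hsum : ∑ i ∈ nbrs, sgn (s i).2 = #nbrs * sgn b := by
    rw [sum_congr rfl fun i hi => by
      rw [hlabel i (dist_le_of_knnRank_lt hcard (mem_filter.mp hi).2)], sum_const, nsmul_eq_mul]
  rw [hsum]
  cases b <;> simp [sgn, hnbrs]

theorem astute_knnClassify {k n : ℕ} (hk : 0 < k) {s : Fin n → α × Bool} {r γ : ℝ}
    (hγ : 0 < γ) {T : Bool → Set α}
    (hs : ∀ j, (s j).1 ∉ thickening (2 * r - γ / 2) (T !(s j).2))
    {c x : α} {y : Bool} (hcount : k ≤ #{j | (s j).1 ∈ ball c (γ / 2)})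
    (hxc : x ∈ ball c (γ / 2)) (hx : x ∈ T y) :
    Astute (knnClassify k s) (r - γ) (x, y) := by
  intro x' hx'
  replace hx' : dist x' x ≤ r - γ := hx'
  rw [mem_ball] at hxc
  refine knnClassify_eq_of_le_card hk (R := r) (hcount.trans (card_le_card fun j hj => ?_)) ?_
  · simp only [mem_filter, mem_univ, true_and, mem_ball] at hj ⊢
    linarith [dist_triangle4 (s j).1 c x x', dist_comm c x, dist_comm x x']
  · intro i hi
    by_contra hne
    refine hs i (mem_thickening_iff.mpr ⟨x, by simpa [Bool.eq_not_of_ne hne] using hx, ?_⟩)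
    linarith [dist_triangle (s i).1 x' x]

end NearestNeighbors

theorem one_sub_le_toReal_measure_of_diff_subset {Ω : Type*} [MeasurableSpace Ω]
    {μ : Measure Ω} [IsFiniteMeasure μ] {G B s : Set Ω} (hG : μ G = 1) {δ : ℝ}
    (hδ : 0 ≤ δ) (hB : μ B ≤ ENNReal.ofReal δ) (hs : G \ B ⊆ s) : 1 - δ ≤ (μ s).toReal := by
  have h : 1 ≤ μ s + ENNReal.ofReal δ :=
    calc 1 = μ G := hG.symm
      _ ≤ μ (G \ B) + μ B :=
        (measure_mono (Set.subset_sdiff_union G B)).trans (measure_union_le _ _)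
      _ ≤ μ s + ENNReal.ofReal δ := add_le_add (measure_mono hs) hB
  have := ENNReal.toReal_mono (by finiteness) h
  rw [ENNReal.toReal_add (measure_ne_top μ s) ENNReal.ofReal_ne_top, ENNReal.toReal_ofReal hδ,
    ENNReal.toReal_one] at this
  linarith

section Concentration

open ProbabilityTheory

theorem natCast_card_filter_mem_eq_sum_indicator {ι Ω : Type*} [Fintype ι] (A : Set Ω) :
    (fun s : ι → Ω => (#{j | s j ∈ A} : ℝ)) = ∑ j, fun s => A.indicator 1 (s j) := by
  ext s
  simp [Set.indicator_apply]

variable {Ω : Type*} [MeasurableSpace Ω] {μ : Measure Ω} [IsProbabilityMeasure μ] {A : Set Ω}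

theorem memLp_indicator_one (hA : MeasurableSet A) (p : ℝ≥0∞) :
    MemLp (A.indicator (1 : Ω → ℝ)) p μ :=
  memLp_indicator_const p hA 1 (Or.inr (measure_ne_top μ A))

theorem integral_pi_card_filter_mem (hA : MeasurableSet A) (n : ℕ) :
    ∫ s, (#{j | s j ∈ A} : ℝ) ∂Measure.pi (fun _ : Fin n => μ) = n * μ.real A := by
  rw [natCast_card_filter_mem_eq_sum_indicator, Finset.sum_fn, integral_finsetSum _ fun j _ =>
    ((integrable_const 1).indicator hA).comp_measurable (measurable_pi_apply j)]
  simp [integral_comp_eval (μ := fun _ => μ) (measurable_one.indicator hA).aestronglyMeasurable,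
    integral_indicator_one hA]

theorem variance_pi_card_filter_mem_le (hA : MeasurableSet A) (n : ℕ) :
    variance (fun s => (#{j | s j ∈ A} : ℝ)) (Measure.pi fun _ : Fin n => μ) ≤ n / 4 := by
  have hvar : variance (A.indicator 1) μ ≤ ((1 - 0) / 2) ^ 2 :=
    variance_le_sq_of_bounded (ae_of_all _ fun x => by
      by_cases hx : x ∈ A <;> simp [hx]) (measurable_one.indicator hA).aemeasurable
  rw [natCast_card_filter_mem_eq_sum_indicator,
    variance_sum_pi fun _ => memLp_indicator_one hA 2]
  simp only [sum_const, card_univ, Fintype.card_fin, nsmul_eq_mul]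
  nlinarith [(n.cast_nonneg : (0 : ℝ) ≤ n)]

theorem measure_pi_card_filter_mem_lt_le (hA : MeasurableSet A) {a : ℝ} (ha : 0 < a)
    (haA : ENNReal.ofReal a ≤ μ A) {n k : ℕ} (hn : 0 < n) (hk : (k : ℝ) ≤ n * a / 2) :
    Measure.pi (fun _ : Fin n => μ) {s | #{j | s j ∈ A} < k} ≤
      ENNReal.ofReal (1 / a ^ 2 / n) := by
  set π := Measure.pi fun _ : Fin n => μ
  have hq : a ≤ μ.real A := (ENNReal.ofReal_le_iff_le_toReal (measure_ne_top μ A)).mp haA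
  have hc : 0 < n * a / 2 := by positivity
  have hmemLp : MemLp (fun s => (#{j | s j ∈ A} : ℝ)) 2 π := by
    rw [natCast_card_filter_mem_eq_sum_indicator]
    exact memLp_finsetSum' _ fun j _ =>
      (memLp_indicator_one hA 2).comp_measurePreserving (measurePreserving_eval _ j)
  calc π {s | #{j | s j ∈ A} < k}
      ≤ π {s | n * a / 2 ≤
          |(#{j | s j ∈ A} : ℝ) - ∫ s, (#{j | s j ∈ A} : ℝ) ∂π|} := by
        refine measure_mono fun s hs => ?_
        have hs : (#{j | s j ∈ A} : ℝ) < k := by exact_mod_cast hs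
        rw [Set.mem_ofPred, integral_pi_card_filter_mem hA, le_abs]
        right
        nlinarith
    _ ≤ ENNReal.ofReal (variance (fun s => (#{j | s j ∈ A} : ℝ)) π / (n * a / 2) ^ 2) :=
        meas_ge_le_variance_div_sq hmemLp hc
    _ ≤ ENNReal.ofReal (1 / a ^ 2 / n) := by
        refine ENNReal.ofReal_le_ofReal ?_
        calc _ ≤ (n / 4 : ℝ) / (n * a / 2) ^ 2 := by
              gcongr; exact variance_pi_card_filter_mem_le hA n
          _ = 1 / a ^ 2 / n := by field_simp; ring

theorem eventually_measure_pi_exists_card_filter_mem_lt_le {ι : Type*} (H : Finset ι)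
    {A : ι → Set Ω} (hA : ∀ c ∈ H, MeasurableSet (A c)) {η : ℝ} (hη : 0 < η)
    (hηA : ∀ c ∈ H, ENNReal.ofReal η ≤ μ (A c)) {k : ℕ → ℕ}
    (hk : Tendsto (fun n => (k n : ℝ) / n) atTop (nhds 0)) {δ : ℝ} (hδ : 0 < δ) :
    ∀ᶠ n in atTop, Measure.pi (fun _ : Fin n => μ) {s | ∃ c ∈ H, #{j | s j ∈ A c} < k n}
      ≤ ENNReal.ofReal δ := by
  filter_upwards [hk.eventually_lt_const (half_pos hη),
    (tendsto_const_div_atTop_nhds_zero_nat (#H / η ^ 2 : ℝ)).eventually_lt_const hδ,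
    eventually_gt_atTop 0] with n hkn_lt hHn hn
  have hkn : (k n : ℝ) ≤ n * η / 2 := by
    rw [div_lt_iff₀ (Nat.cast_pos.mpr hn)] at hkn_lt
    linarith
  calc Measure.pi (fun _ : Fin n => μ) {s | ∃ c ∈ H, #{j | s j ∈ A c} < k n}
      = Measure.pi (fun _ : Fin n => μ) (⋃ c ∈ H, {s | #{j | s j ∈ A c} < k n}) := by
        congr 1
        ext s
        simp
    _ ≤ ∑ c ∈ H, Measure.pi (fun _ : Fin n => μ) {s | #{j | s j ∈ A c} < k n} :=
        measure_biUnion_finset_le _ _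
    _ ≤ ∑ _c ∈ H, ENNReal.ofReal (1 / η ^ 2 / n) :=
        sum_le_sum fun c hc => measure_pi_card_filter_mem_lt_le (hA c hc) hη (hηA c hc) hn hkn
    _ = ENNReal.ofReal (#H / η ^ 2 / n) := by
        rw [sum_const, nsmul_eq_mul, ← ENNReal.ofReal_natCast,
          ← ENNReal.ofReal_mul (by positivity)]
        ring_nf
    _ ≤ ENNReal.ofReal δ := ENNReal.ofReal_le_ofReal hHn.le

end Concentration

section Covering

variable {X : Type*} [PseudoMetricSpace X] [MeasurableSpace X]

theorem exists_heavy_balls_almost_cover (hX : TotallyBounded (Set.univ : Set X))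
    (μ : Measure X) {ρ ε : ℝ} (hρ : 0 < ρ) (hε : 0 < ε) :
    ∃ H : Finset X, ∃ η > 0, (∀ c ∈ H, ENNReal.ofReal η ≤ μ (ball c ρ)) ∧
      μ (⋃ c ∈ H, ball c ρ)ᶜ ≤ ENNReal.ofReal ε := by
  obtain ⟨t, ht, hcover⟩ := totallyBounded_iff.mp hX ρ hρ
  set C := ht.toFinset
  -- the at most `#C` light balls, of mass `< η` each, carry total mass `< ε`
  set η := ε / (#C + 1)
  have hη : 0 < η := by positivity
  refine ⟨C.filter fun c => ENNReal.ofReal η ≤ μ (ball c ρ), η, hη,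
    fun c hc => (mem_filter.mp hc).2, ?_⟩
  calc μ (⋃ c ∈ C.filter fun c => ENNReal.ofReal η ≤ μ (ball c ρ), ball c ρ)ᶜ
      ≤ μ (⋃ c ∈ C.filter fun c => ¬ ENNReal.ofReal η ≤ μ (ball c ρ), ball c ρ) := by
        refine measure_mono fun x hx => ?_
        obtain ⟨c, hc, hxc⟩ := Set.mem_iUnion₂.mp (hcover (Set.mem_univ x))
        have hcC : c ∈ C := ht.mem_toFinset.mpr hc
        have hlight : ¬ ENNReal.ofReal η ≤ μ (ball c ρ) := fun hheavy =>
          hx (Set.mem_biUnion (mem_filter.mpr ⟨hcC, hheavy⟩) hxc)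
        exact Set.mem_biUnion (mem_filter.mpr ⟨hcC, hlight⟩) hxc
    _ ≤ ∑ c ∈ C.filter fun c => ¬ ENNReal.ofReal η ≤ μ (ball c ρ), μ (ball c ρ) :=
        measure_biUnion_finset_le _ _
    _ ≤ #C • ENNReal.ofReal η := by
        refine (sum_le_card_nsmul _ _ _ fun c hc => (not_le.mp (mem_filter.mp hc).2).le).trans ?_
        gcongr
        exact filter_subset _ _
    _ ≤ ENNReal.ofReal ε := by
        rw [nsmul_eq_mul, ← ENNReal.ofReal_natCast, ← ENNReal.ofReal_mul (by positivity)]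
        refine ENNReal.ofReal_le_ofReal ?_
        calc (#C : ℝ) * η ≤ (#C + 1) * η := by gcongr; linarith
          _ = ε := mul_div_cancel₀ ε (by positivity)

end Covering

theorem optAstuteness_le_one (D : Measure (X × Bool)) [IsProbabilityMeasure D] (r : ℝ) :
    optAstuteness D r ≤ 1 :=
  ciSup_le fun _ => ENNReal.toReal_le_of_le_ofReal zero_le_one (by simpa using prob_le_one)

instance isProbabilityMeasure_samples (D : Measure (X × Bool)) [IsProbabilityMeasure D]
    (n : ℕ) : IsProbabilityMeasure (samples D n) := by
  unfold samples
  infer_instance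

theorem ae_notMem_thickening_of_separated [OpensMeasurableSpace X]
    {D : Measure (X × Bool)} [IsProbabilityMeasure D] {T : Bool → Set X}
    (hT : D {p | p.1 ∈ T p.2} = 1) {r ρ : ℝ}
    (hsep : ∀ x₁ ∈ T true, ∀ x₂ ∈ T false, 2 * r < dist x₁ x₂) (hρ : ρ ≤ 2 * r) :
    ∀ᵐ p ∂D, p.1 ∉ thickening ρ (T !p.2) := by
  have hslice : ∀ b, Measurable fun x : X => x ∉ thickening ρ (T !b) := fun b =>
    measurableSet_setOfPred.mp isOpen_thickening.measurableSet.compl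
  have hmeas : MeasurableSet {p : X × Bool | p.1 ∉ thickening ρ (T !p.2)} :=
    measurableSet_setOfPred.mpr (measurable_from_prod_countable_left hslice)
  show D {p : X × Bool | p.1 ∉ thickening ρ (T !p.2)}ᶜ = 0
  refine (prob_compl_eq_zero_iff hmeas).mpr
    (le_antisymm prob_le_one (hT.symm.trans_le (measure_mono fun p hp hthick => ?_)))
  obtain ⟨z, hz, hpz⟩ := mem_thickening_iff.mp hthick
  obtain ⟨x, y⟩ := p
  cases y
  · linarith [hsep z hz x hp, dist_comm x z]
  · linarith [hsep x hp z hz]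

theorem one_sub_le_astuteness_knnClassify {k n : ℕ} (hk : 0 < k) {r γ : ℝ} (hγ : 0 < γ)
    {D : Measure (X × Bool)} [IsFiniteMeasure D] {T : Bool → Set X}
    (hT : D {p | p.1 ∈ T p.2} = 1) {H : Finset X} {ε : ℝ} (hε : 0 ≤ ε)
    (hcover : D (Prod.fst ⁻¹' ⋃ c ∈ H, ball c (γ / 2))ᶜ ≤ ENNReal.ofReal ε)
    {s : Fin n → X × Bool} (hcount : ∀ c ∈ H, k ≤ #{j | s j ∈ Prod.fst ⁻¹' ball c (γ / 2)})
    (hs : ∀ j, (s j).1 ∉ thickening (2 * r - γ / 2) (T !(s j).2)) :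
    1 - ε ≤ astuteness D (knnClassify k s) (r - γ) := by
  refine one_sub_le_toReal_measure_of_diff_subset hT hε hcover ?_
  rintro ⟨x, y⟩ ⟨hx, hxW⟩
  obtain ⟨c, hc, hxc⟩ := Set.mem_iUnion₂.mp (not_not.mp hxW)
  exact astute_knnClassify hk hγ hs (hcount c hc) hxc hx

/-- Corollary 1 of the paper.  Let `X` be a totally bounded metric space
and `D` an `r`-separated distribution over `X × {-1,+1}`.  If `(k_n)` is any sequence of
positive integers with `k_n / n → 0`, then the `k_n`-nearest-neighbor classification
algorithm is `r`-consistent with respect to `D`. -/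
theorem knn_rConsistent_of_rSeparated
    {X : Type*} [MetricSpace X] [MeasurableSpace X] [BorelSpace X]
    (hX : TotallyBounded (Set.univ : Set X))
    (D : Measure (X × Bool)) (hD : IsProbabilityMeasure D)
    (r : ℝ) (hsep : RSeparated D r)
    (k : ℕ → ℕ) (hkpos : ∀ n, 0 < k n)
    (hk : Tendsto (fun n : ℕ => (k n : ℝ) / n) atTop (nhds 0)) :
    RConsistent (fun n s => knnClassify (k n) s) D r := by
  obtain ⟨Tp, Tm, hT, hTsep⟩ := hsep
  set T : Bool → Set X := fun b => if b then Tp else Tm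
  rintro ε ⟨hε, -⟩ δ ⟨hδ, -⟩ γ ⟨hγ, -⟩
  have hfar : ∀ᵐ p ∂D, p.1 ∉ thickening (2 * r - γ / 2) (T !p.2) :=
    ae_notMem_thickening_of_separated hT hTsep (by linarith)
  obtain ⟨H, η, hη, hheavy, hcover⟩ :=
    exists_heavy_balls_almost_cover hX (D.map Prod.fst) (half_pos hγ) hε
  rw [Measure.map_apply measurable_fst
    (Finset.measurableSet_biUnion H fun _ _ => measurableSet_ball).compl] at hcover
  obtain ⟨N, hN⟩ := (eventually_measure_pi_exists_card_filter_mem_lt_le H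
    (A := fun c => Prod.fst ⁻¹' ball c (γ / 2))
    (fun c _ => measurableSet_ball.preimage measurable_fst) hη
    (fun c hc => (hheavy c hc).trans_eq (Measure.map_apply measurable_fst measurableSet_ball))
    hk hδ).exists_forall_of_atTop
  refine ⟨N, fun n hn => ?_⟩
  have hsamples_far :
      samples D n {s | ¬ ∀ j, (s j).1 ∉ thickening (2 * r - γ / 2) (T !(s j).2)} = 0 :=
    ae_iff.mp (ae_all_iff.mpr fun j =>
      (Measure.tendsto_eval_ae_ae (μ := fun _ => D)).eventually hfar)
  refine one_sub_le_toReal_measure_of_diff_subset measure_univ hδ.le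
    ((measure_union_le _ _).trans
      ((add_le_add (hN n hn) hsamples_far.le).trans_eq (add_zero _))) ?_
  rintro s ⟨-, hs⟩
  simp only [Set.mem_union, Set.mem_ofPred, not_or, not_exists, not_and, not_lt, not_not] at hs
  obtain ⟨hcount, hsamples⟩ := hs
  show optAstuteness D r - ε ≤ _
  linarith [optAstuteness_le_one D r,
    one_sub_le_astuteness_knnClassify (hkpos n) hγ hT hε.le hcover hcount hsamples]

end RobustNP
end
end

section
/- Let X be a totally bounded and complete metric space, let M be any classification algorithm over X × {−1,+1} (a map from finite labeled samples to classifiers X → {−1,+1}), let r > 0, and let D be a distribution over X × {−1,+1}. Then for any ε, δ ∈ (0,1) and any γ ∈ (0, r/2), there exists N such that for all n ≥ N, with probability at least 1−δ over S ~ D^n: A_{r−γ}(M(S), D) ≥ A_r(M(S), D_S) − ε, where D_S denotes the uniform distribution over the sample S. -/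
open MeasureTheory Metric Filter Finset
open scoped Classical ENNReal

noncomputable section

namespace RobustNP

variable {X : Type*} [MetricSpace X] [MeasurableSpace X]

/-!
Cut `X` into finitely many measurable cells of diameter `< γ` and split each cell by label. A
classifier astute with radius `r` at one sample point of a labeled cell is astute with radius
`r - γ` on the whole labeled cell. By Hoeffding's inequality and a union bound over the cells, with
high probability every labeled cell receives at most its `D`-mass plus `t` of the sample; then the
empirical `r`-astuteness is at most the `D`-mass of the cells on which the classifier is
`(r - γ)`-astute, plus `t` times the number of cells.
-/

open ProbabilityTheory

theorem _root_.TotallyBounded.exists_measurable_fin_dist_lt {α : Type*} [PseudoMetricSpace α]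
    [MeasurableSpace α] [OpensMeasurableSpace α] (hα : TotallyBounded (Set.univ : Set α))
    {η : ℝ} (hη : 0 < η) :
    ∃ (m : ℕ) (c : α → Fin m), Measurable c ∧ ∀ x y, c x = c y → dist x y < η := by
  obtain ⟨t, ht, hcover⟩ := Metric.totallyBounded_iff.mp hα (η / 2) (half_pos hη)
  obtain ⟨m, z, rfl⟩ := ht.fin_embedding
  set B : Fin m → Set α := fun j => ball (z j) (η / 2)
  have hmem : ∀ x, ∃ j, x ∈ disjointed B j := fun x => by
    have : x ∈ ⋃ j, disjointed B j := by
      rw [iUnion_disjointed]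
      simpa [B] using hcover (Set.mem_univ x)
    exact Set.mem_iUnion.mp this
  choose c hc using hmem
  have hfiber : ∀ j, c ⁻¹' {j} = disjointed B j := fun j => by
    ext x
    refine ⟨fun hx => hx ▸ hc x, fun hx => ?_⟩
    by_contra hne
    exact Set.disjoint_left.mp (disjoint_disjointed B hne) (hc x) hx
  refine ⟨m, c, measurable_to_countable' fun j => ?_, fun x y hxy => ?_⟩
  · rw [hfiber, disjointed_eq_inter_compl]
    exact measurableSet_ball.inter <|
      MeasurableSet.iInter fun k => MeasurableSet.iInter fun _ => measurableSet_ball.compl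
  · have hx := mem_ball.mp (disjointed_subset B _ (hc x))
    have hy := mem_ball.mp (disjointed_subset B _ (hc y))
    rw [hxy] at hx
    linarith [dist_triangle_right x y (z (c y))]

theorem Astute.of_dist_le {α : Type*} [MetricSpace α] {f : α → Bool} {r γ : ℝ}
    {p p' : α × Bool} (h : Astute f r p) (hd : dist p'.1 p.1 ≤ γ) (hy : p'.2 = p.2) :
    Astute f (r - γ) p' := by
  intro x hx
  rw [hy]
  exact h x <| mem_closedBall.mpr <|
    (dist_triangle x p'.1 p.1).trans (by linarith [mem_closedBall.mp hx])

theorem exists_labeled_cells_astute_sub_of_astute {α : Type*} [MetricSpace α]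
    [MeasurableSpace α] [OpensMeasurableSpace α] (hα : TotallyBounded (Set.univ : Set α))
    {γ : ℝ} (hγ : 0 < γ) (r : ℝ) :
    ∃ (m : ℕ) (q : α × Bool → Fin m × Bool), (∀ κ, MeasurableSet (q ⁻¹' {κ})) ∧
      ∀ f p p', Astute f r p → q p = q p' → Astute f (r - γ) p' := by
  obtain ⟨m, c, hc, hc_dist⟩ := hα.exists_measurable_fin_dist_lt hγ
  refine ⟨m, fun p => (c p.1, p.2), fun κ => ?_, fun f p p' h hpp' => ?_⟩
  · exact (hc.comp measurable_fst).prodMk measurable_snd (measurableSet_singleton κ)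
  · exact h.of_dist_le (hc_dist _ _ (congrArg Prod.fst hpp').symm).le
      (congrArg Prod.snd hpp').symm

section Empirical

variable {Y : Type*} [MeasurableSpace Y] (D : Measure Y)

theorem measureReal_pi_card_mem_ge_le [IsProbabilityMeasure D] {E : Set Y}
    (hE : MeasurableSet E) (n : ℕ) {t : ℝ} (ht : 0 ≤ t) :
    (Measure.pi fun _ : Fin n => D).real {s | n * (D.real E + t) ≤ #{i | s i ∈ E}} ≤
      Real.exp (-2 * n * t ^ 2) := by
  set μ := Measure.pi fun _ : Fin n => D
  set g : Y → ℝ := E.indicator 1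
  have hg : Measurable g := measurable_one.indicator hE
  have hindep : iIndepFun (fun i (s : Fin n → Y) => g (s i) - D.real E) μ :=
    iIndepFun_pi (X := fun _ y => g y - D.real E) fun _ => (hg.sub_const _).aemeasurable
  have hsubG : ∀ i, HasSubgaussianMGF (fun s : Fin n → Y => g (s i) - D.real E)
      ((‖(1 : ℝ) - 0‖₊ / 2) ^ 2) μ := by
    intro i
    have := hasSubgaussianMGF_of_mem_Icc (μ := μ) (X := fun s => g (s i)) (a := 0) (b := 1)
      (hg.comp (measurable_pi_apply i)).aemeasurable
      (ae_of_all _ fun s => ⟨Set.indicator_nonneg (fun _ _ => zero_le_one) _,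
        Set.indicator_le_self' (fun _ _ => zero_le_one) _⟩)
    rwa [integral_comp_eval (μ := fun _ => D) hg.aestronglyMeasurable,
      integral_indicator_one hE] at this
  have hsum : ∀ s : Fin n → Y,
      ∑ i, (g (s i) - D.real E) = #{i | s i ∈ E} - n * D.real E := by
    intro s
    simp [g, Finset.sum_sub_distrib, Set.indicator_apply, Finset.sum_boole]
  have := HasSubgaussianMGF.measure_sum_ge_le_of_iIndepFun hindep (s := univ)
    (fun i _ => hsubG i) (ε := n * t) (by positivity)
  have hexp :
      -(n * t) ^ 2 / (2 * ((∑ _i : Fin n, (‖(1 : ℝ) - 0‖₊ / 2) ^ 2 : NNReal) : ℝ)) =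
        -2 * n * t ^ 2 := by
    rcases n.eq_zero_or_pos with rfl | hn
    · simp
    · norm_num
      field_simp
      ring
  have hset : {s : Fin n → Y | n * (D.real E + t) ≤ #{i | s i ∈ E}} =
      {s | n * t ≤ ∑ i, (g (s i) - D.real E)} := by
    ext s
    simp only [Set.mem_ofPred_eq, hsum]
    constructor <;> intro h <;> linarith
  rw [hset, ← hexp]
  exact this

theorem measureReal_pi_exists_card_fiber_ge_le [IsProbabilityMeasure D] {ι : Type*}
    [Fintype ι] [DecidableEq ι] {q : Y → ι} (hq : ∀ κ, MeasurableSet (q ⁻¹' {κ}))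
    (n : ℕ) {t : ℝ} (ht : 0 ≤ t) :
    (Measure.pi fun _ : Fin n => D).real
        {s | ∃ κ, n * (D.real (q ⁻¹' {κ}) + t) ≤ #{i | q (s i) = κ}} ≤
      Fintype.card ι * Real.exp (-2 * n * t ^ 2) := by
  have hU : {s : Fin n → Y | ∃ κ, n * (D.real (q ⁻¹' {κ}) + t) ≤ #{i | q (s i) = κ}} =
      ⋃ κ, {s | n * (D.real (q ⁻¹' {κ}) + t) ≤ #{i | s i ∈ q ⁻¹' {κ}}} := by
    ext s
    simp
  rw [hU]
  calc _ ≤ ∑ κ, _ := measureReal_iUnion_fintype_le _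
    _ ≤ ∑ _κ : ι, Real.exp (-2 * n * t ^ 2) :=
      sum_le_sum fun κ _ => measureReal_pi_card_mem_ge_le D (hq κ) n ht
    _ = _ := by simp

theorem card_filter_le_of_card_fiber_le [IsFiniteMeasure D] {ι : Type*} [Fintype ι]
    [DecidableEq ι] {q : Y → ι} (hq : ∀ κ, MeasurableSet (q ⁻¹' {κ})) {P Q : Y → Prop}
    (hPQ : ∀ y y', P y → q y = q y' → Q y') {n : ℕ} {s : Fin n → Y} {t : ℝ}
    (ht : 0 ≤ t)
    (hs : ∀ κ, (#{i | q (s i) = κ} : ℝ) ≤ n * (D.real (q ⁻¹' {κ}) + t)) :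
    (#{i | P (s i)} : ℝ) ≤ n * (D.real {y | Q y} + Fintype.card ι * t) := by
  set A : Finset ι := (univ.filter fun i => P (s i)).image (q ∘ s)
  have hPA : #{i | P (s i)} ≤ #{i | q (s i) ∈ A} :=
    card_le_card fun i hi => mem_filter.mpr ⟨mem_univ i, mem_image_of_mem _ hi⟩
  have hAQ : q ⁻¹' A ⊆ {y | Q y} := by
    intro y hy
    obtain ⟨i, hi, hqi⟩ := mem_image.mp (show q y ∈ A from hy)
    exact hPQ _ _ (mem_filter.mp hi).2 hqi
  calc (#{i | P (s i)} : ℝ) ≤ #{i | q (s i) ∈ A} := by exact_mod_cast hPA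
    _ = ∑ κ ∈ A, (#{i | q (s i) = κ} : ℝ) := by
      rw [← sum_card_fiberwise_eq_card_filter]
      push_cast
      rfl
    _ ≤ ∑ κ ∈ A, n * (D.real (q ⁻¹' {κ}) + t) := sum_le_sum fun κ _ => hs κ
    _ = n * (D.real (q ⁻¹' A) + #A * t) := by
      rw [← mul_sum, sum_add_distrib, sum_measureReal_preimage_singleton A fun κ _ => hq κ]
      simp
    _ ≤ n * (D.real {y | Q y} + Fintype.card ι * t) := by
      have hmono : D.real (q ⁻¹' A) ≤ D.real {y | Q y} := measureReal_mono hAQ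
      have hcard : (#A : ℝ) ≤ Fintype.card ι := by exact_mod_cast card_le_univ A
      gcongr

/-- The bad event does not involve `P` and `Q`, which may therefore depend on the sample. -/
theorem one_sub_le_measureReal_pi_card_filter_div_le [IsProbabilityMeasure D] {ι : Type*}
    [Fintype ι] [DecidableEq ι] {q : Y → ι} (hq : ∀ κ, MeasurableSet (q ⁻¹' {κ}))
    {n : ℕ} (hn : 0 < n) {P Q : (Fin n → Y) → Y → Prop}
    (hPQ : ∀ s y y', P s y → q y = q y' → Q s y') {t : ℝ} (ht : 0 ≤ t) :
    1 - Fintype.card ι * Real.exp (-2 * n * t ^ 2) ≤ (Measure.pi fun _ : Fin n => D).real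
      {s | (#{i | P s (s i)} : ℝ) / n - Fintype.card ι * t ≤ D.real {y | Q s y}} := by
  set Bad := {s : Fin n → Y | ∃ κ, n * (D.real (q ⁻¹' {κ}) + t) ≤ #{i | q (s i) = κ}}
  have hgood : Badᶜ ⊆
      {s | (#{i | P s (s i)} : ℝ) / n - Fintype.card ι * t ≤ D.real {y | Q s y}} := by
    intro s hs
    simp only [Bad, Set.mem_compl_iff, Set.mem_ofPred_eq, not_exists, not_le] at hs
    have := card_filter_le_of_card_fiber_le D hq (hPQ s) ht fun κ => (hs κ).le
    rw [Set.mem_ofPred_eq, sub_le_iff_le_add, div_le_iff₀ (by exact_mod_cast hn)]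
    linarith
  have hcompl := measureReal_union_le (μ := Measure.pi fun _ : Fin n => D) Bad Badᶜ
  rw [Set.union_compl_self, probReal_univ] at hcompl
  linarith [measureReal_pi_exists_card_fiber_ge_le D hq n ht,
    measureReal_mono (μ := Measure.pi fun _ : Fin n => D) hgood]

end Empirical

theorem astuteness_ge_empirical_general
    {X : Type*} [MetricSpace X] [MeasurableSpace X] [BorelSpace X]
    (hX : TotallyBounded (Set.univ : Set X))
    (M : ∀ n : ℕ, (Fin n → X × Bool) → X → Bool)
    (r : ℝ)
    (D : Measure (X × Bool)) (hD : IsProbabilityMeasure D)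
    (ε δ : ℝ) (hε : ε ∈ Set.Ioo (0 : ℝ) 1) (hδ : δ ∈ Set.Ioo (0 : ℝ) 1)
    (γ : ℝ) (hγ : γ ∈ Set.Ioo (0 : ℝ) (r / 2)) :
    ∃ N : ℕ, ∀ n ≥ N,
      1 - δ ≤ (samples D n {smp : Fin n → X × Bool |
        ((univ.filter fun i : Fin n => Astute (M n smp) r (smp i)).card : ℝ) / n - ε
          ≤ astuteness D (M n smp) (r - γ)}).toReal := by
  have := hD
  obtain ⟨m, q, hq, hq_astute⟩ := exists_labeled_cells_astute_sub_of_astute hX hγ.1 r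
  set k : ℝ := (Fintype.card (Fin m × Bool) : ℝ)
  -- `k + 1` rather than `k`, since `k = 0` when `X` is empty
  set t := ε / (k + 1)
  have ht : 0 < t := div_pos hε.1 (by positivity)
  have hkt : k * t ≤ ε := by
    rw [mul_div_assoc', div_le_iff₀ (by positivity)]
    nlinarith [hε.1]
  have hlim : Tendsto (fun n : ℕ => k * Real.exp (-2 * n * t ^ 2)) atTop (nhds 0) := by
    have : Tendsto (fun n : ℕ => 2 * t ^ 2 * n) atTop atTop :=
      tendsto_natCast_atTop_atTop.const_mul_atTop (by positivity)
    simpa [mul_comm, mul_left_comm, mul_assoc] using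
      (Real.tendsto_exp_neg_atTop_nhds_zero.comp this).const_mul k
  obtain ⟨N, hN⟩ := eventually_atTop.mp
    ((hlim.eventually (gt_mem_nhds hδ.1)).and (eventually_ge_atTop 1))
  refine ⟨N, fun n hn => ?_⟩
  obtain ⟨hsmall, hn1⟩ := hN n hn
  calc 1 - δ ≤ 1 - k * Real.exp (-2 * n * t ^ 2) := by linarith
    _ ≤ _ := one_sub_le_measureReal_pi_card_filter_div_le D hq hn1
      (P := fun s => Astute (M n s) r) (Q := fun s => Astute (M n s) (r - γ))
      (fun s => hq_astute (M n s)) ht.le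
    _ ≤ _ := measureReal_mono fun s hs => (sub_le_sub_left hkt _).trans hs

/-- Lemma 4 of the paper.  Let `X` be a totally bounded and complete
metric space, `M` any classification algorithm, `r > 0`, and `D` a distribution over
`X × {-1,+1}`.  For any `ε, δ ∈ (0,1)` and `γ ∈ (0, r/2)` there exists `N` such that for
`n ≥ N`, with probability at least `1 - δ` over `S ~ D^n`,
`A_{r-γ}(M(S), D) ≥ A_r(M(S), D_S) - ε`, where `D_S` is the empirical distribution of the
sample (so `A_r(M(S), D_S)` is the fraction of sample points at which `M(S)` is astute). -/
theorem astuteness_ge_empirical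
    {X : Type*} [MetricSpace X] [CompleteSpace X] [MeasurableSpace X] [BorelSpace X]
    (hX : TotallyBounded (Set.univ : Set X))
    (M : ∀ n : ℕ, (Fin n → X × Bool) → X → Bool)
    (r : ℝ) (hr : 0 < r)
    (D : Measure (X × Bool)) (hD : IsProbabilityMeasure D)
    (ε δ : ℝ) (hε : ε ∈ Set.Ioo (0 : ℝ) 1) (hδ : δ ∈ Set.Ioo (0 : ℝ) 1)
    (γ : ℝ) (hγ : γ ∈ Set.Ioo (0 : ℝ) (r / 2)) :
    ∃ N : ℕ, ∀ n ≥ N,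
      1 - δ ≤ (samples D n {smp : Fin n → X × Bool |
        ((univ.filter fun i : Fin n => Astute (M n smp) r (smp i)).card : ℝ) / n - ε
          ≤ astuteness D (M n smp) (r - γ)}).toReal :=
  astuteness_ge_empirical_general hX M r D hD ε δ hε hδ γ hγ

end RobustNP
end
end

section
/- Let X be a metric space and let D be an r-separated distribution over X × {−1,+1}. Then the optimal astuteness at radius r equals one: A_r^*(D) = sup_f A_r(f,D) = 1; indeed, the classifier assigning +1 to all points within distance r of T^+ and −1 elsewhere is astute with radius r almost surely on D. -/
open MeasureTheory Metric Filter Finset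
open scoped Classical ENNReal

noncomputable section

/-! A point of `T⁺` lies at distance `≤ r` from itself, and the `r`-ball around a point of `T⁻`
stays at distance `> r` from `T⁺` by the triangle inequality and `2r`-separation. Hence the
indicator of the closed `r`-thickening of `T⁺` is astute at every point of the support, which
has probability one. -/

namespace RobustNP

section

variable {X : Type*} [PseudoMetricSpace X]

theorem lt_dist_of_separated {Tp Tm : Set X} {r : ℝ}
    (hsep : ∀ x₁ ∈ Tp, ∀ x₂ ∈ Tm, 2 * r < dist x₁ x₂) {x x' t : X} (hx : x ∈ Tm)
    (hx' : x' ∈ closedBall x r) (ht : t ∈ Tp) : r < dist x' t := by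
  have hsep_tx := hsep t ht x hx
  have htri := dist_triangle t x' x
  rw [dist_comm t x'] at htri
  linarith [mem_closedBall.mp hx']

end

variable {X : Type*} [MetricSpace X]

theorem astute_of_mem_separated {Tp Tm : Set X} {r : ℝ}
    (hsep : ∀ x₁ ∈ Tp, ∀ x₂ ∈ Tm, 2 * r < dist x₁ x₂) {p : X × Bool}
    (hp : p.1 ∈ (if p.2 then Tp else Tm)) :
    Astute (fun x => if ∃ t ∈ Tp, dist x t ≤ r then true else false) r p := by
  obtain ⟨x, y⟩ := p
  intro x' hx'
  cases y with
  | true => simpa using ⟨x, hp, mem_closedBall.mp hx'⟩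
  | false => simpa using fun t ht => lt_dist_of_separated hsep hp hx' ht

variable [MeasurableSpace X]

theorem astuteness_le_one (D : Measure (X × Bool)) [IsProbabilityMeasure D] (f : X → Bool)
    (r : ℝ) : astuteness D f r ≤ 1 :=
  ENNReal.toReal_le_of_le_ofReal zero_le_one (by simpa using prob_le_one)

theorem optAstuteness_eq_one_of_measure_astute_eq_one (D : Measure (X × Bool))
    [IsProbabilityMeasure D] {f : X → Bool} {r : ℝ} (hf : D {p | Astute f r p} = 1) :
    optAstuteness D r = 1 := by
  have hbdd : BddAbove (Set.range fun g => astuteness D g r) :=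
    ⟨1, Set.forall_mem_range.mpr (astuteness_le_one D · r)⟩
  refine le_antisymm (ciSup_le (astuteness_le_one D · r)) ?_
  calc (1 : ℝ) = astuteness D f r := by simp [astuteness, hf]
    _ ≤ optAstuteness D r := le_ciSup hbdd f

theorem optAstuteness_eq_one_of_rSeparated_general
    {X : Type*} [MetricSpace X] [MeasurableSpace X]
    (D : Measure (X × Bool)) (hD : IsProbabilityMeasure D) (r : ℝ)
    (Tp Tm : Set X)
    (hsupp : D {p : X × Bool | p.1 ∈ (if p.2 then Tp else Tm)} = 1)
    (hsep : ∀ x₁ ∈ Tp, ∀ x₂ ∈ Tm, 2 * r < dist x₁ x₂) :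
    optAstuteness D r = 1 ∧
    D {p : X × Bool |
        Astute (fun x => if ∃ t ∈ Tp, dist x t ≤ r then true else false) r p} = 1 := by
  have hastute : D {p : X × Bool |
      Astute (fun x => if ∃ t ∈ Tp, dist x t ≤ r then true else false) r p} = 1 :=
    le_antisymm prob_le_one <|
      hsupp ▸ measure_mono fun p hp => astute_of_mem_separated hsep hp
  exact ⟨optAstuteness_eq_one_of_measure_astute_eq_one D hastute, hastute⟩

/-- If `D` is an `r`-separated distribution over `X × {-1,+1}`
(witnessed by `T⁺ = Tp` and `T⁻ = Tm`), then the optimal astuteness at radius `r` is one: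
`A_r^*(D) = 1`; indeed the classifier assigning `+1` to all points within distance `r` of
`T⁺` and `-1` elsewhere is astute with radius `r` almost surely on `D`. -/
theorem optAstuteness_eq_one_of_rSeparated
    {X : Type*} [MetricSpace X] [MeasurableSpace X] [BorelSpace X]
    (D : Measure (X × Bool)) (hD : IsProbabilityMeasure D) (r : ℝ)
    (Tp Tm : Set X)
    (hsupp : D {p : X × Bool | p.1 ∈ (if p.2 then Tp else Tm)} = 1)
    (hsep : ∀ x₁ ∈ Tp, ∀ x₂ ∈ Tm, 2 * r < dist x₁ x₂) :
    optAstuteness D r = 1 ∧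
    D {p : X × Bool |
        Astute (fun x => if ∃ t ∈ Tp, dist x t ≤ r then true else false) r p} = 1 :=
  optAstuteness_eq_one_of_rSeparated_general D hD r Tp Tm hsupp hsep

end RobustNP
end
end

section
/- Let X = [−1,1] ⊂ ℝ and let D be the distribution on X × {−1,+1} with P_D[(−1,−1)] = 0.1 and P_D[(1,+1)] = 0.9. Let K(x) = exp(−min(|x|, 0.2)²) and let (h_n) be any positive sequence with lim_{n→∞} h_n = 0. Let W be the kernel classifier constructed from K and (h_n), i.e., on sample S = ((x_1,y_1),...,(x_n,y_n)) it outputs W_S(x) = +1 iff Σ_i w_i^S(x)·y_i > 0 where w_i^S(x) = K(|x−x_i|/h_n)/Σ_j K(|x−x_j|/h_n). Then W is not r-consistent with respect to D for r = 0.3: there exist ε, δ ∈ (0,1) and γ ∈ (0, 0.3) such that for every N there is n ≥ N for which, with probability greater than δ over S ~ D^n, A_{0.3−γ}(W_S, D) < A_{0.3}^*(D) − ε. In particular, D is 0.3-separated (so A_{0.3}^*(D) = 1), yet for all sufficiently large n, with high probability over S ~ D^n, W_S(−0.7) = +1, so W_S is not robust at −1 with radius 0.3 and hence A_{0.3}(W_S,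 D) ≤ 0.9. -/
/-!
`D` is `0.3`-separated (its two atoms are at distance `2`), so the optimal astuteness is `1`.
But `K(t) = exp(-min(|t|, 0.2)²)` is flat for `|t| ≥ 0.2`, so once `|h_n| ≤ 1` every sample
point, which almost surely lies at `±1`, gets the same kernel weight seen from `-0.8` as from
`0.8`. Hence the kernel classifier takes the same value at `-0.8` and at `0.8`, and one of the
two atoms of `D` is not astute with radius `0.2`: the astuteness is at most `0.9` for every
sample.
-/

open MeasureTheory Metric Filter Finset
open scoped Classical ENNReal

noncomputable section

namespace RobustNP

variable {X : Type*} [MetricSpace X] [MeasurableSpace X]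

/-- The instance space of Example 3 of the paper: the interval `[-1, 1] ⊆ ℝ`. -/
abbrev X14 : Type := Set.Icc (-1 : ℝ) 1

/-- The point `-1` of `[-1,1]`. -/
def ptNeg : X14 := ⟨-1, by norm_num⟩

/-- The point `1` of `[-1,1]`. -/
def ptPos : X14 := ⟨1, by norm_num⟩

/-- The distribution of Example 3: mass `0.1` at `(-1, -1)` and mass `0.9` at `(1, +1)`. -/
def D14 : Measure (X14 × Bool) :=
  ENNReal.ofReal 0.1 • Measure.dirac (ptNeg, false) +
    ENNReal.ofReal 0.9 • Measure.dirac (ptPos, true)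

/-- The kernel of Example 3: `K(x) = exp(-(min(|x|, 0.2))²)`. -/
def K14 : ℝ → ℝ := fun x => Real.exp (-(min |x| 0.2) ^ 2)

theorem optAstuteness_eq_one_of_rSeparated_s14 {D : Measure (X × Bool)} [IsProbabilityMeasure D]
    {r : ℝ} (hD : RSeparated D r) : optAstuteness D r = 1 := by
  obtain ⟨Tp, Tm, hT, hsep⟩ := hD
  have hle : ∀ f : X → Bool, astuteness D f r ≤ 1 := fun f => measureReal_le_one
  refine le_antisymm (ciSup_le hle) ?_
  -- Predict `+1` exactly on the closed `r`-neighbourhood of `T⁺`; by separation it misses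
  -- the `r`-neighbourhood of `T⁻`.
  let f : X → Bool := fun x => decide (∃ x₁ ∈ Tp, dist x x₁ ≤ r)
  have hsub : {p : X × Bool | p.1 ∈ (if p.2 then Tp else Tm)} ⊆ {p | Astute f r p} := by
    rintro ⟨x, _ | _⟩ hx x' hx' <;> simp only [Set.mem_ofPred_eq, if_true] at hx
    · simp only [f, decide_eq_false_iff_not, not_exists, not_and, not_le]
      intro x₁ hx₁
      have := hsep x₁ hx₁ x hx
      linarith [dist_triangle x₁ x' x, dist_comm x' x₁, mem_closedBall.1 hx']
    · exact decide_eq_true ⟨x, hx, hx'⟩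
  have hA : astuteness D f r = 1 := by
    rw [astuteness, ← measureReal_def]
    exact le_antisymm measureReal_le_one
      (by simpa [measureReal_def, hT] using measureReal_mono hsub (measure_ne_top D _))
  exact hA ▸ le_ciSup ⟨1, Set.forall_mem_range.2 hle⟩ f

theorem not_rConsistent_of_frequently_ae {M : ∀ n : ℕ, (Fin n → X × Bool) → X → Bool}
    {D : Measure (X × Bool)} {r ε δ γ : ℝ} (hε : ε ∈ Set.Ioo 0 1) (hδ : δ ∈ Set.Ioo 0 1)
    (hγ : γ ∈ Set.Ioo 0 r)
    (hbad : ∃ᶠ n in atTop, ∀ᵐ s ∂samples D n,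
      astuteness D (M n s) (r - γ) < optAstuteness D r - ε) :
    ¬ RConsistent M D r := by
  intro hM
  obtain ⟨N, hN⟩ := hM ε hε δ hδ γ hγ
  obtain ⟨n, hn, hae⟩ := (frequently_atTop.1 hbad) N
  have hnull : samples D n {s | optAstuteness D r - ε ≤ astuteness D (M n s) (r - γ)} = 0 :=
    measure_eq_zero_iff_ae_notMem.2 (hae.mono fun s hs => not_le.2 hs)
  linarith [hN n hn, hnull ▸ ENNReal.toReal_zero, hδ.2]

theorem ae_pi_forall_of_ae {Y : Type*} [MeasurableSpace Y] {μ : Measure Y} [SigmaFinite μ]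
    {P : Y → Prop} (hP : ∀ᵐ y ∂μ, P y) (n : ℕ) :
    ∀ᵐ s ∂Measure.pi (fun _ : Fin n => μ), ∀ i, P (s i) :=
  ae_all_iff.2 fun _ => Measure.tendsto_eval_ae_ae.eventually hP

lemma dist_X14 (x y : X14) : dist x y = |x.val - y.val| := by
  rw [Subtype.dist_eq, Real.dist_eq]

lemma D14_apply (E : Set (X14 × Bool)) :
    D14 E = ENNReal.ofReal 0.1 * E.indicator 1 (ptNeg, false)
      + ENNReal.ofReal 0.9 * E.indicator 1 (ptPos, true) := by
  simp [D14, Measure.dirac_apply, Measure.add_apply, Measure.smul_apply, smul_eq_mul]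

lemma D14_eq_one {E : Set (X14 × Bool)} (hneg : (ptNeg, false) ∈ E) (hpos : (ptPos, true) ∈ E) :
    D14 E = 1 := by
  rw [D14_apply, Set.indicator_of_mem hneg, Set.indicator_of_mem hpos, Pi.one_apply, Pi.one_apply,
    mul_one, mul_one, ← ENNReal.ofReal_add (by norm_num) (by norm_num)]
  norm_num

instance : IsProbabilityMeasure D14 :=
  ⟨D14_eq_one (Set.mem_univ _) (Set.mem_univ _)⟩

lemma D14_toReal_le {E : Set (X14 × Bool)}
    (hE : (ptNeg, false) ∉ E ∨ (ptPos, true) ∉ E) : (D14 E).toReal ≤ 0.9 := by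
  have hind : ∀ p, E.indicator (1 : X14 × Bool → ℝ≥0∞) p ≤ 1 := fun p => by
    by_cases hp : p ∈ E <;> simp [hp]
  refine ENNReal.toReal_le_of_le_ofReal (by norm_num) ?_
  rw [D14_apply]
  rcases hE with hE | hE
  · rw [Set.indicator_of_notMem hE, mul_zero, zero_add]
    exact mul_le_of_le_one_right' (hind _)
  · rw [Set.indicator_of_notMem hE, mul_zero, add_zero]
    exact (mul_le_of_le_one_right' (hind _)).trans (ENNReal.ofReal_le_ofReal (by norm_num))

lemma D14_rSeparated : RSeparated D14 0.3 := by
  refine ⟨{ptPos}, {ptNeg}, D14_eq_one (by simp) (by simp), ?_⟩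
  rintro _ rfl _ rfl
  rw [dist_X14]
  norm_num [ptPos, ptNeg]

lemma ae_D14 : ∀ᵐ p ∂D14, p.1 = ptNeg ∨ p.1 = ptPos := by
  rw [ae_iff, D14_apply]
  simp

lemma astuteness_D14_le_of_apply_eq {f : X14 → Bool} {r : ℝ} {x x' : X14}
    (hx : x ∈ closedBall ptNeg r) (hx' : x' ∈ closedBall ptPos r) (hf : f x = f x') :
    astuteness D14 f r ≤ 0.9 := by
  apply D14_toReal_le
  cases hfx : f x
  · exact Or.inr fun h => by simpa [← hf, hfx] using h x' hx'
  · exact Or.inl fun h => by simpa [hfx] using h x hx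

lemma K14_of_le_abs {t : ℝ} (ht : 0.2 ≤ |t|) : K14 t = Real.exp (-0.2 ^ 2) := by
  rw [K14, min_eq_right ht]

lemma K14_div_eq {h d d' : ℝ} (hh : |h| ≤ 1) (hd : 0.2 ≤ d) (hd' : 0.2 ≤ d') :
    K14 (d / h) = K14 (d' / h) := by
  rcases eq_or_ne h 0 with rfl | h0
  · simp
  have hlarge : ∀ e : ℝ, 0.2 ≤ e → 0.2 ≤ |e / h| := fun e he => by
    rw [abs_div, le_div_iff₀ (abs_pos.2 h0), abs_of_nonneg (by linarith : (0 : ℝ) ≤ e)]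
    nlinarith [abs_nonneg h]
  rw [K14_of_le_abs (hlarge d hd), K14_of_le_abs (hlarge d' hd')]

lemma kernelClassify_K14_eq {h : ℝ} (hh : |h| ≤ 1) {n : ℕ} {s : Fin n → X14 × Bool}
    (hs : ∀ i, (s i).1 = ptNeg ∨ (s i).1 = ptPos) :
    kernelClassify K14 h s ⟨-0.8, by norm_num⟩ = kernelClassify K14 h s ⟨0.8, by norm_num⟩ := by
  have hfar : ∀ i, 0.2 ≤ dist (⟨-0.8, by norm_num⟩ : X14) (s i).1 ∧
      0.2 ≤ dist (⟨0.8, by norm_num⟩ : X14) (s i).1 := fun i => by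
    rcases hs i with hi | hi <;> rw [hi, dist_X14, dist_X14] <;> norm_num [ptNeg, ptPos]
  have hK := fun i => K14_div_eq hh (hfar i).1 (hfar i).2
  simp only [kernelClassify, hK]

theorem kernel_not_rConsistent_example_general
    (h : ℕ → ℝ) (hh : Tendsto h atTop (nhds 0)) :
    RSeparated D14 0.3 ∧
    ¬ RConsistent (fun n (s : Fin n → X14 × Bool) => kernelClassify K14 (h n) s) D14 0.3 := by
  refine ⟨D14_rSeparated, not_rConsistent_of_frequently_ae (ε := 0.05) (δ := 0.5) (γ := 0.1)
    (by norm_num) (by norm_num) (by norm_num) ?_⟩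
  have hsmall : ∀ᶠ n in atTop, |h n| ≤ 1 := by
    simpa [Real.dist_eq] using hh.eventually (closedBall_mem_nhds (0 : ℝ) one_pos)
  refine (hsmall.mono fun n hn => ?_).frequently
  filter_upwards [ae_pi_forall_of_ae ae_D14 n] with s hs
  have hbad := astuteness_D14_le_of_apply_eq (r := 0.3 - 0.1)
    (by rw [mem_closedBall, dist_X14]; norm_num [ptNeg, abs_of_nonneg])
    (by rw [mem_closedBall, dist_X14]; norm_num [ptPos, abs_of_nonpos]) (kernelClassify_K14_eq hn hs)
  rw [optAstuteness_eq_one_of_rSeparated_s14 D14_rSeparated]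
  linarith

/-- Example 3 of the paper.  With `X = [-1,1]`, `D = D14`,
`K = K14` and any positive bandwidth sequence `h_n → 0`, the distribution `D` is
`0.3`-separated, yet the kernel classifier built from `K` and `(h_n)` is *not*
`0.3`-consistent with respect to `D`. -/
theorem kernel_not_rConsistent_example
    (h : ℕ → ℝ) (hhpos : ∀ n, 0 < h n) (hh : Tendsto h atTop (nhds 0)) :
    RSeparated D14 0.3 ∧
    ¬ RConsistent (fun n (s : Fin n → X14 × Bool) => kernelClassify K14 (h n) s) D14 0.3 :=
  kernel_not_rConsistent_example_general h hh

end RobustNP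
end
end
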